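/- arXiv:1511.01600 — 2 statements merged into one kernel-verified Lean document; each statement's English description precedes it below -/
import Mathlib

section
/- Let M be a Hopf hypersurface in CH^n (c = −1) with Aξ = ξ. Then for all tangent vector fields X, Y: (∇_X R_ξ)Y = (∇_X A)Y. Consequently, by the Codazzi equation, ⟨(∇_X R_ξ)Y − (∇_Y R_ξ)X, W⟩ = 2η(W)⟨φX,Y⟩ + η(Y)⟨φX,W⟩ − η(X)⟨φY,W⟩, i.e. M satisfies condition (1.3) with k = 1. -/
/-- Abstract model of a real hypersurface `M` in a non-flat complex space form
`M_n(c)` (`c = ±1`).  `F` plays the role of the ring of smooth functions on `M`,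
`V` the module of tangent vector fields, `g` the induced metric, `phi, xi` the
almost contact structure, `A` the shape operator, `act X f` the derivative `Xf`,
`nabla` the Levi-Civita connection and `bracket` the Lie bracket.  The axioms
are the standard identities for real hypersurfaces in `M_n(c)`, including the
Gauss and Codazzi equations. -/
structure Hyp (F : Type*) [CommRing F] [Algebra ℝ F]
    (V : Type*) [AddCommGroup V] [Module F V] where
  g : V →ₗ[F] V →ₗ[F] F
  phi : V →ₗ[F] V
  A : V →ₗ[F] V
  xi : V
  c : F
  act : V → F → F
  nabla : V → V → V
  bracket : V → V → V
  hc : c = 1 ∨ c = -1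
  gsymm : ∀ (X Y : V), g X Y = g Y X
  phi2 : ∀ X, phi (phi X) = -X + g X xi • xi
  phixi : phi xi = 0
  unitxi : g xi xi = 1
  phiskew : ∀ X Y, g (phi X) Y = - g X (phi Y)
  Asymm : ∀ X Y, g (A X) Y = g X (A Y)
  act_add : ∀ (X : V) (f h : F), act X (f + h) = act X f + act X h
  act_mul : ∀ (X : V) (f h : F), act X (f * h) = act X f * h + f * act X h
  act_tensor : ∀ (f : F) (X : V) (h : F), act (f • X) h = f * act X h
  act_addX : ∀ (X Y : V) (f : F), act (X + Y) f = act X f + act Y f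
  act_one : ∀ X, act X (1 : F) = 0
  nabla_add : ∀ X Y Z, nabla X (Y + Z) = nabla X Y + nabla X Z
  nabla_smul : ∀ (X : V) (f : F) (Y : V), nabla X (f • Y) = act X f • Y + f • nabla X Y
  nabla_addX : ∀ X Y Z, nabla (X + Y) Z = nabla X Z + nabla Y Z
  nabla_smulX : ∀ (f : F) (X Y : V), nabla (f • X) Y = f • nabla X Y
  compat : ∀ X Y Z, act X (g Y Z) = g (nabla X Y) Z + g Y (nabla X Z)
  torsion : ∀ X Y, nabla X Y - nabla Y X = bracket X Y
  nabla_xi : ∀ X, nabla X xi = phi (A X)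
  nabla_phi : ∀ X Y, nabla X (phi Y) - phi (nabla X Y) = g Y xi • A X - g (A X) Y • xi
  gauss : ∀ X Y Z, nabla X (nabla Y Z) - nabla Y (nabla X Z) - nabla (bracket X Y) Z
      = c • ((g Y Z) • X - (g X Z) • Y + (g (phi Y) Z) • phi X - (g (phi X) Z) • phi Y
          - (2 * g (phi X) Y) • phi Z)
        + g (A Y) Z • A X - g (A X) Z • A Y
  codazzi : ∀ X Y,
      (nabla X (A Y) - A (nabla X Y)) - (nabla Y (A X) - A (nabla Y X))
        = c • (g X xi • phi Y - g Y xi • phi X - (2 * g (phi X) Y) • xi)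

namespace Hyp

variable {F : Type*} [CommRing F] [Algebra ℝ F]
variable {V : Type*} [AddCommGroup V] [Module F V]
variable (H : Hyp F V)

/-- `η(X) = ⟨X, ξ⟩`. -/
def eta (X : V) : F := H.g X H.xi

/-- `α = ⟨Aξ, ξ⟩`. -/
def alpha : F := H.g (H.A H.xi) H.xi

/-- The curvature tensor `R(X,Y)Z` of `M`. -/
def R (X Y Z : V) : V :=
  H.nabla X (H.nabla Y Z) - H.nabla Y (H.nabla X Z) - H.nabla (H.bracket X Y) Z

/-- The structure Jacobi operator `R_ξ(Y) = R(Y,ξ)ξ`. -/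
def Rxi (Y : V) : V := H.R Y H.xi H.xi

/-- The covariant derivative `(∇_X A)Y` of the shape operator. -/
def nablaA (X Y : V) : V := H.nabla X (H.A Y) - H.A (H.nabla X Y)

/-- The covariant derivative `(∇_X R_ξ)Y` of the structure Jacobi operator. -/
def nablaRxi (X Y : V) : V := H.nabla X (H.Rxi Y) - H.Rxi (H.nabla X Y)

/-- `f` is a constant function. -/
def IsConstant (f : F) : Prop := ∀ X : V, H.act X f = 0

/-- Condition (1.3) of the paper:
`⟨(∇_X R_ξ)Y − (∇_Y R_ξ)X, W⟩ = k(2η(W)⟨φX,Y⟩ + η(Y)⟨φX,W⟩ − η(X)⟨φY,W⟩)`. -/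
def Cond13 (k : F) : Prop := ∀ X Y W : V,
  H.g (H.nablaRxi X Y - H.nablaRxi Y X) W
    = k * (2 * H.eta W * H.g (H.phi X) Y + H.eta Y * H.g (H.phi X) W
        - H.eta X * H.g (H.phi Y) W)

/-- `M` is a Hopf hypersurface: `Aξ = αξ`. -/
def Hopf : Prop := H.A H.xi = H.alpha • H.xi

/-- `M` is totally `η`-umbilical: `AX = λX` for all `X` in the holomorphic
distribution `D = ker η`, with `λ` constant. -/
def TotallyEtaUmbilical : Prop :=
  ∃ lam : F, H.IsConstant lam ∧ ∀ X : V, H.eta X = 0 → H.A X = lam • X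

end Hyp

open Hyp in
/-- for a Hopf hypersurface in `CH^n` (`c = −1`) with `Aξ = ξ`,
one has `(∇_X R_ξ)Y = (∇_X A)Y`, and hence (by the Codazzi equation) `M`
satisfies condition (1.3) with `k = 1`. -/
theorem stmt5 {F : Type*} [CommRing F] [Algebra ℝ F]
    {V : Type*} [AddCommGroup V] [Module F V] (H : Hyp F V)
    (hc : H.c = -1) (hxi : H.A H.xi = H.xi) :
    (∀ X Y : V, H.nablaRxi X Y = H.nablaA X Y) ∧ H.Cond13 1 := by
  -- derivative of constants is zero
  have act_zero : ∀ X : V, H.act X (0 : F) = 0 := by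
    intro X
    have h : H.act X (0 : F) + 0 = H.act X 0 + H.act X 0 := by
      rw [add_zero, ← H.act_add, add_zero]
    exact (add_left_cancel h).symm
  have act_neg_one : ∀ X : V, H.act X (-1 : F) = 0 := by
    intro X
    have h : H.act X ((1 : F) + (-1)) = H.act X 1 + H.act X (-1) := H.act_add X 1 (-1)
    rw [add_neg_cancel, act_zero, H.act_one, zero_add] at h
    exact h.symm
  have nabla_sub : ∀ X Y Z : V, H.nabla X (Y - Z) = H.nabla X Y - H.nabla X Z := by
    intro X Y Z
    have : Y - Z = Y + (-1 : F) • Z := by rw [neg_smul, one_smul]; abel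
    rw [this, H.nabla_add, H.nabla_smul, act_neg_one X, zero_smul, neg_smul, one_smul]
    abel
  have hAY : ∀ Y : V, H.g (H.A Y) H.xi = H.g Y H.xi := by
    intro Y; rw [H.Asymm, hxi]
  have hpY : ∀ Y : V, H.g (H.phi Y) H.xi = 0 := by
    intro Y; rw [H.phiskew, H.phixi]; simp
  have hRxi : ∀ Y : V, H.Rxi Y = H.A Y - Y := by
    intro Y
    show H.nabla Y (H.nabla H.xi H.xi) - H.nabla H.xi (H.nabla Y H.xi)
        - H.nabla (H.bracket Y H.xi) H.xi = H.A Y - Y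
    rw [H.gauss Y H.xi H.xi, hc, hxi, H.phixi, H.unitxi, hAY Y, hpY Y]
    simp only [map_zero, LinearMap.zero_apply, LinearMap.map_zero, smul_zero, zero_smul,
      one_smul, neg_smul, sub_zero, add_zero]
    module
  have part1 : ∀ X Y : V, H.nablaRxi X Y = H.nablaA X Y := by
    intro X Y
    show H.nabla X (H.Rxi Y) - H.Rxi (H.nabla X Y)
        = H.nabla X (H.A Y) - H.A (H.nabla X Y)
    rw [hRxi, hRxi, nabla_sub]
    abel
  refine ⟨part1, ?_⟩
  intro X Y W
  show H.g (H.nablaRxi X Y - H.nablaRxi Y X) W = _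
  rw [part1, part1]
  have hcod := H.codazzi X Y
  have : H.nablaA X Y - H.nablaA Y X
      = H.c • (H.g X H.xi • H.phi Y - H.g Y H.xi • H.phi X
          - (2 * H.g (H.phi X) Y) • H.xi) := hcod
  rw [this, hc]
  simp only [map_smul, map_sub, LinearMap.sub_apply, LinearMap.smul_apply, smul_eq_mul,
    Hyp.eta]
  rw [H.gsymm W H.xi]
  ring
end

section
/- Let M be a non-Hopf real hypersurface in M_n(c) with Aξ = αξ + βU, AU = βξ + γU, AφU = δφU for functions γ, δ, and suppose there is a unit vector field Z orthogonal to ξ, U, φU with AZ = λZ and AφZ = λφZ. Then (λ−δ)(λ² − αλ − c) = β·(φU λ), and (λ−γ)(λ² − αλ − c) − β²λ = 0, and hence βλ(λ−δ) − (λ−γ)(φU λ) = 0. -/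
open Hyp in
/-- Lemma 1: for a non-Hopf real hypersurface with
`Aξ = αξ + βU`, `AU = βξ + γU`, `AφU = δφU` and a unit `Z ⊥ ξ, U, φU` with
`AZ = λZ`, `AφZ = λφZ`, one has `(λ−δ)(λ²−αλ−c) = β·(φU λ)`,
`(λ−γ)(λ²−αλ−c) − β²λ = 0`, hence `βλ(λ−δ) − (λ−γ)(φU λ) = 0`. -/
theorem stmt6 {F : Type*} [CommRing F] [Algebra ℝ F]
    {V : Type*} [AddCommGroup V] [Module F V] (H : Hyp F V)
    (β γ δ lam : F) (U Z : V)
    (hβ : IsUnit β) (hU : H.eta U = 0) (hUu : H.g U U = 1)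
    (hAxi : H.A H.xi = H.alpha • H.xi + β • U)
    (hAU : H.A U = β • H.xi + γ • U)
    (hAphiU : H.A (H.phi U) = δ • H.phi U)
    (hZu : H.g Z Z = 1) (hZxi : H.eta Z = 0)
    (hZU : H.g Z U = 0) (hZphiU : H.g Z (H.phi U) = 0)
    (hAZ : H.A Z = lam • Z) (hAphiZ : H.A (H.phi Z) = lam • H.phi Z) :
    (lam - δ) * (lam * lam - H.alpha * lam - H.c) = β * H.act (H.phi U) lam ∧
    (lam - γ) * (lam * lam - H.alpha * lam - H.c) - β * β * lam = 0 ∧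
    β * lam * (lam - δ) - (lam - γ) * H.act (H.phi U) lam = 0 := by

  have hUxi : H.g U H.xi = 0 := hU
  have hZxi' : H.g Z H.xi = 0 := hZxi
  have half : ∀ x : F, x + x = 0 → x = 0 := by
    intro x hx
    have k : (algebraMap ℝ F) (2⁻¹ : ℝ) * 2 = 1 := by
      rw [← map_ofNat (algebraMap ℝ F) 2, ← map_mul]
      norm_num
    calc x = ((algebraMap ℝ F) (2⁻¹ : ℝ) * 2) * x := by rw [k, one_mul]
    _ = (algebraMap ℝ F) (2⁻¹ : ℝ) * (x + x) := by ring
    _ = 0 := by rw [hx, mul_zero]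
  have gxiphiZ : H.g H.xi (H.phi Z) = 0 := by
    have h := H.phiskew H.xi Z
    rw [H.phixi] at h
    simp only [map_zero, LinearMap.zero_apply] at h
    linear_combination h
  have gphiZxi : H.g (H.phi Z) H.xi = 0 := by
    have h := H.phiskew Z H.xi
    rw [H.phixi] at h
    simpa using h
  have gxiZ : H.g H.xi Z = 0 := by rw [H.gsymm]; exact hZxi'
  have gZphiZ : H.g Z (H.phi Z) = 0 := by
    have hs := H.gsymm Z (H.phi Z)
    have hk := H.phiskew Z Z
    exact half _ (by linear_combination hs + hk)
  have gphiZU : H.g (H.phi Z) U = 0 := by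
    have h := H.phiskew Z U
    rw [hZphiU] at h
    simpa using h
  have gUphiZ : H.g U (H.phi Z) = 0 := by rw [H.gsymm]; exact gphiZU
  have gphiUZ : H.g (H.phi U) Z = 0 := by rw [H.gsymm]; exact hZphiU
  have gphiUxi : H.g (H.phi U) H.xi = 0 := by
    have h := H.phiskew U H.xi
    rw [H.phixi] at h
    simpa using h
  have gphiZphiZ : H.g (H.phi Z) (H.phi Z) = 1 := by
    have h := H.phiskew Z (H.phi Z)
    rw [H.phi2] at h
    simp only [map_add, map_neg, map_smul, smul_eq_mul, hZxi', hZu, mul_zero, add_zero] at h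
    linear_combination h
  have gphiZphiU : H.g (H.phi Z) (H.phi U) = 0 := by
    have h := H.phiskew Z (H.phi U)
    rw [H.phi2] at h
    simp only [map_add, map_neg, map_smul, smul_eq_mul, hUxi, hZU, mul_zero, add_zero] at h
    linear_combination h
  have gAZU : H.g (H.A Z) U = 0 := by
    rw [hAZ]
    simp [map_smul, LinearMap.smul_apply, smul_eq_mul, hZU]
  have hA_phiZ : ∀ W' : V, H.g (H.A W') (H.phi Z) = lam * H.g W' (H.phi Z) := by
    intro W'
    rw [H.Asymm, hAphiZ, map_smul, smul_eq_mul]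
  have hA_Z : ∀ W' : V, H.g (H.A W') Z = lam * H.g W' Z := by
    intro W'
    rw [H.Asymm, hAZ, map_smul, smul_eq_mul]
  have gphinabla : H.g (H.phi (H.nabla Z U)) Z = - H.g (H.nabla Z U) (H.phi Z) :=
    H.phiskew _ Z
  have hnphiU : H.nabla Z (H.phi U) = H.phi (H.nabla Z U) := by
    have t := H.nabla_phi Z U
    rw [hUxi, gAZU, zero_smul, zero_smul, sub_zero] at t
    exact sub_eq_zero.mp t
  have cod1 := congrArg (fun v => H.g v (H.phi Z)) (H.codazzi Z H.xi)
  simp only [hAxi, hAZ, H.nabla_xi, H.nabla_add, H.nabla_smul, H.phixi, map_add,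
    map_sub, map_smul, map_zero, map_neg, LinearMap.add_apply, LinearMap.sub_apply,
    LinearMap.smul_apply, LinearMap.zero_apply, LinearMap.neg_apply, smul_eq_mul, hA_phiZ, H.unitxi,
    hZxi', gxiphiZ, gphiZxi, gZphiZ, gUphiZ, gphiZphiZ, mul_zero, zero_mul,
    mul_one, one_mul, zero_smul, one_smul, smul_zero, add_zero, zero_add,
    sub_zero, zero_sub, neg_zero] at cod1
  have cod2 := congrArg (fun v => H.g v Z) (H.codazzi Z (H.phi U))
  simp only [hAphiU, hnphiU, hAZ, H.nabla_smul, gphinabla, map_add, map_sub,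
    map_smul, map_zero, map_neg, LinearMap.add_apply, LinearMap.sub_apply,
    LinearMap.smul_apply, LinearMap.zero_apply, LinearMap.neg_apply, smul_eq_mul, hA_Z, hZu, hZxi',
    gxiZ, gphiUZ, gphiUxi, gphiZphiU, mul_zero, zero_mul, mul_one, one_mul,
    zero_smul, one_smul, smul_zero, add_zero, zero_add, sub_zero, zero_sub,
    neg_zero] at cod2
  have cod3 := congrArg (fun v => H.g v (H.phi Z)) (H.codazzi Z U)
  simp only [hAU, hAZ, H.nabla_xi, H.nabla_add, H.nabla_smul, map_add, map_sub,
    map_smul, map_zero, map_neg, LinearMap.add_apply, LinearMap.sub_apply,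
    LinearMap.smul_apply, LinearMap.zero_apply, LinearMap.neg_apply, smul_eq_mul, hA_phiZ, hUxi,
    hZxi', gxiphiZ, gZphiZ, gUphiZ, gphiZphiZ, gphiZU, mul_zero, zero_mul,
    mul_one, one_mul, zero_smul, one_smul, smul_zero, add_zero, zero_add,
    sub_zero, zero_sub, neg_zero] at cod3
  have e1 : β * H.g (H.nabla Z U) (H.phi Z) = lam * lam - H.alpha * lam - H.c := by
    linear_combination cod1
  have e2 : (lam - δ) * H.g (H.nabla Z U) (H.phi Z) = H.act (H.phi U) lam := by
    linear_combination cod2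
  have e3 : (lam - γ) * H.g (H.nabla Z U) (H.phi Z) = β * lam := by
    linear_combination -cod3
  refine ⟨?_, ?_, ?_⟩
  · linear_combination β * e2 - (lam - δ) * e1
  · linear_combination β * e3 - (lam - γ) * e1
  · linear_combination (lam - γ) * e2 - (lam - δ) * e3
end
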